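/- Let F be a Ore forest-skein category, G = Frac(F,1) ⊆ G^T its T-version, and X the set of classes [t,j] of pairs (tree t, leaf index j) modulo (t,j) ~ (t∘f, j^f) where j^f is the index of the first leaf of the j-th tree of f among the leaves of t∘f. Then the relation [t,j] ⪯ [t',j'] defined by choosing forests f, f' with t∘f = t'∘f' and requiring j^f ≤ j'^{f'} is a well-defined total order on X, independent of the choice of f, f'. -/

import Mathlib

namespace ForestSkein

/-- A coloured finite rooted planar binary tree with colours in `S`. -/
inductive CTree (S : Type) : Type
  | leaf : CTree S
  | node : S → CTree S → CTree S → CTree S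

namespace CTree

/-- Number of leaves of a coloured binary tree. -/
def leaves {S : Type} : CTree S → ℕ
  | .leaf => 1
  | .node _ l r => leaves l + leaves r

/-- Graft a list of trees onto the leaves of a tree (vertical stacking). -/
def graft {S : Type} : CTree S → List (CTree S) → CTree S
  | .leaf, gs => gs.headD .leaf
  | .node c l r, gs => .node c (graft l (gs.take (leaves l))) (graft r (gs.drop (leaves l)))

/-- Relabel the colours of a tree along a map of colour sets. -/
def recolour {S S' : Type} (c : S → S') : CTree S → CTree S'
  | .leaf => .leaf
  | .node x l r => .node (c x) (recolour c l) (recolour c r)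

end CTree

/-- A coloured forest: a finite list of coloured binary trees.  Its roots are the
entries of the list, its leaves are the leaves of its trees. -/
abbrev Forest (S : Type) := List (CTree S)

/-- Total number of leaves of a forest. -/
def Forest.leaves {S : Type} (f : Forest S) : ℕ := (f.map CTree.leaves).sum

/-- Composition of forests: `Forest.comp f g` stacks `g` on top of `f`, attaching
the `j`-th root of `g` to the `j`-th leaf of `f` (meaningful when
`Forest.leaves f = g.length`). -/
def Forest.comp {S : Type} : Forest S → Forest S → Forest S
  | [], _ => []
  | t :: ts, g =>
      CTree.graft t (g.take (CTree.leaves t)) :: Forest.comp ts (g.drop (CTree.leaves t))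

/-- The elementary forest `a_{j,n}` (1-indexed) with `n` roots, a single `a`-coloured
caret at the `j`-th root, and all other trees trivial. -/
def elemForest {S : Type} (a : S) (j n : ℕ) : Forest S :=
  List.replicate (j - 1) CTree.leaf ++ [CTree.node a CTree.leaf CTree.leaf] ++
    List.replicate (n - j) CTree.leaf

/-- A set of skein relations consists of pairs of trees with equal numbers of leaves. -/
def LeafPres {S : Type} (R : CTree S → CTree S → Prop) : Prop :=
  ∀ t t' : CTree S, R t t' → CTree.leaves t = CTree.leaves t'

/-- The equivalence relation on coloured forests generated by a set `R` of skein
relations (pairs of trees), closed under composition and tensor product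
(horizontal juxtaposition).  The quotient is the forest-skein category
presented by `R`. -/
inductive SkeinEquiv {S : Type} (R : CTree S → CTree S → Prop) : Forest S → Forest S → Prop
  | of {t t' : CTree S} : R t t' → SkeinEquiv R [t] [t']
  | refl (f : Forest S) : SkeinEquiv R f f
  | symm {f g : Forest S} : SkeinEquiv R f g → SkeinEquiv R g f
  | trans {f g h : Forest S} : SkeinEquiv R f g → SkeinEquiv R g h → SkeinEquiv R f h
  | comp {f f' g g' : Forest S} :
      SkeinEquiv R f f' → SkeinEquiv R g g' → SkeinEquiv R (Forest.comp f g) (Forest.comp f' g')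
  | tensor {f f' g g' : Forest S} :
      SkeinEquiv R f f' → SkeinEquiv R g g' → SkeinEquiv R (f ++ g) (f' ++ g')

/-- Left-cancellativity of a forest-skein category given by the equivalence `E` on
forests: `f ∘ g = f ∘ h` implies `g = h`. -/
def LeftCancel {S : Type} (E : Forest S → Forest S → Prop) : Prop :=
  ∀ f g h : Forest S, Forest.leaves f = g.length → Forest.leaves f = h.length →
    E (Forest.comp f g) (Forest.comp f h) → E g h

/-- Ore's property for the forest-skein category given by the equivalence `E`:
any two forests with the same number of roots admit a common right multiple. -/
def OreProp {S : Type} (E : Forest S → Forest S → Prop) : Prop :=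
  ∀ f g : Forest S, f.length = g.length →
    ∃ p q : Forest S, Forest.leaves f = p.length ∧ Forest.leaves g = q.length ∧
      E (Forest.comp f p) (Forest.comp g q)

/-- Equality of the fractions `t ∘ s⁻¹` and `t' ∘ s'⁻¹` in the fraction group:
there are forests `f, f'` with `t ∘ f = t' ∘ f'` and `s ∘ f = s' ∘ f'` modulo `E`. -/
def FracRel {S : Type} (E : Forest S → Forest S → Prop) (t s t' s' : CTree S) : Prop :=
  ∃ f f' : Forest S, CTree.leaves t = f.length ∧ CTree.leaves t' = f'.length ∧
    E [CTree.graft t f] [CTree.graft t' f'] ∧ E [CTree.graft s f] [CTree.graft s' f']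

/-- `leafPos f j` is the (0-indexed) index `j^f` of the first leaf of the `j`-th tree
of the forest `f` among all leaves of `f`. -/
def leafPos {S : Type} (f : Forest S) (j : ℕ) : ℕ := Forest.leaves (f.take j)

/-- Generating relation for the set `X` of marked-leaf classes `[t, j]`:
skein equivalence of the underlying trees, and growth `(t, j) ~ (t ∘ f, j^f)`. -/
inductive MLRel {S : Type} (E : Forest S → Forest S → Prop) :
    CTree S × ℕ → CTree S × ℕ → Prop
  | skein {t t' : CTree S} {j : ℕ} : E [t] [t'] → MLRel E (t, j) (t', j)
  | grow (t : CTree S) (f : Forest S) (j : ℕ) (hf : CTree.leaves t = f.length) :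
      MLRel E (t, j) (CTree.graft t f, leafPos f j)

/-- Equality of marked-leaf classes in `X`. -/
def MLEquiv {S : Type} (E : Forest S → Forest S → Prop) :
    CTree S × ℕ → CTree S × ℕ → Prop :=
  Relation.EqvGen (MLRel E)

/-- The total order `⪯` on marked leaves: `[t, j] ⪯ [t', j']` when for some pair of
forests with `t ∘ f = t' ∘ f'` (modulo `E`) one has `j^f ≤ j'^{f'}`. -/
def MLLe {S : Type} (E : Forest S → Forest S → Prop) (p q : CTree S × ℕ) : Prop :=
  ∃ f f' : Forest S, CTree.leaves p.1 = f.length ∧ CTree.leaves q.1 = f'.length ∧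
    E [CTree.graft p.1 f] [CTree.graft q.1 f'] ∧ leafPos f p.2 ≤ leafPos f' q.2

/-!
Call `(f, f')` a common multiple of the trees `t` and `t'` when `t ∘ f = t' ∘ f'`. Two common
multiples `(f, f')` and `(g, g')` have a common refinement `f ∘ u = g ∘ v` by Ore's property,
and cancelling `t'` on the left gives `f' ∘ u = g' ∘ v` too. Passing from `f` to `f ∘ u` moves
leaf positions along `i ↦ i^u`, which is strictly increasing, so `j^f ≤ j'^{f'}` holds if and
only if `j^g ≤ j'^{g'}`. Hence `⪯` can be read off any common multiple: it is invariant under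
growing a representative, total, and `j^f = j'^{f'}` exhibits `[t, j] = [t', j']`.
-/

variable {S : Type}

namespace CTree

lemma leaves_pos (t : CTree S) : 0 < t.leaves := by
  induction t with
  | leaf => exact Nat.one_pos
  | node _ l r _ ihr => simp only [leaves]; omega

end CTree

namespace Forest

@[simp] lemma leaves_nil : Forest.leaves ([] : Forest S) = 0 := rfl

@[simp] lemma leaves_cons (t : CTree S) (f : Forest S) :
    Forest.leaves (t :: f) = t.leaves + Forest.leaves f := by
  simp [Forest.leaves]

@[simp] lemma leaves_append (f g : Forest S) :
    Forest.leaves (f ++ g) = Forest.leaves f + Forest.leaves g := by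
  simp [Forest.leaves]

lemma leaves_pos_of_ne_nil {f : Forest S} (hf : f ≠ []) : 0 < Forest.leaves f := by
  obtain ⟨t, f, rfl⟩ := List.exists_cons_of_ne_nil hf
  simpa using Nat.lt_add_right _ t.leaves_pos

end Forest

namespace CTree

lemma graft_take (t : CTree S) (g : Forest S) : t.graft (g.take t.leaves) = t.graft g := by
  induction t generalizing g with
  | leaf => cases g <;> simp [graft, leaves]
  | node c l r _ ihr =>
    simp only [graft, leaves, List.take_take, List.drop_take, Nat.min_def, Nat.le_add_right,
      if_true, Nat.add_sub_cancel_left, ihr]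

/-- When `g` has fewer roots than `t` has leaves, the missing roots count as trivial trees. -/
lemma leaves_graft (t : CTree S) (g : Forest S) :
    (t.graft g).leaves =
      Forest.leaves (g.take t.leaves) + (t.leaves - (g.take t.leaves).length) := by
  induction t generalizing g with
  | leaf => cases g <;> simp [graft, leaves]
  | node c l r ihl ihr =>
    simp only [graft, leaves, ihl, ihr, List.take_take, Nat.min_self, List.take_add,
      Forest.leaves_append, List.length_append]
    have hl : (g.take l.leaves).length ≤ l.leaves := by simp
    have hr : ((g.drop l.leaves).take r.leaves).length ≤ r.leaves := by simp
    omega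

lemma leaves_graft_of_length_eq {t : CTree S} {g : Forest S} (h : t.leaves = g.length) :
    (t.graft g).leaves = Forest.leaves g := by
  rw [leaves_graft, h, List.take_length, Nat.sub_self, Nat.add_zero]

lemma leaves_graft_congr {t t' : CTree S} {g g' : Forest S} (ht : t.leaves = t'.leaves)
    (hg : g.map leaves = g'.map leaves) : (t.graft g).leaves = (t'.graft g').leaves := by
  have hlen : g.length = g'.length := by simpa using congrArg List.length hg
  have hsum : Forest.leaves (g.take t.leaves) = Forest.leaves (g'.take t.leaves) := by
    simp only [Forest.leaves, List.map_take, hg]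
  rw [leaves_graft, leaves_graft, ← ht, hsum, List.length_take, List.length_take, hlen]

end CTree

namespace Forest

lemma length_comp (f g : Forest S) : (Forest.comp f g).length = f.length := by
  induction f generalizing g with
  | nil => rfl
  | cons t f ih => simp [Forest.comp, ih]

lemma comp_singleton (t : CTree S) (g : Forest S) : Forest.comp [t] g = [t.graft g] := by
  simp [Forest.comp, CTree.graft_take]

lemma comp_append (f f' g : Forest S) :
    Forest.comp (f ++ f') g =
      Forest.comp f (g.take (Forest.leaves f)) ++ Forest.comp f' (g.drop (Forest.leaves f)) := by
  induction f generalizing g with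
  | nil => simp [Forest.comp]
  | cons t f ih =>
    simp only [List.cons_append, Forest.comp, ih, leaves_cons, List.take_take, List.drop_take,
      List.drop_drop, Nat.min_def, Nat.le_add_right, if_true, Nat.add_sub_cancel_left]

lemma map_leaves_comp_congr {f f' g g' : Forest S}
    (hf : f.map CTree.leaves = f'.map CTree.leaves)
    (hg : g.map CTree.leaves = g'.map CTree.leaves) :
    (Forest.comp f g).map CTree.leaves = (Forest.comp f' g').map CTree.leaves := by
  induction f generalizing f' g g' with
  | nil => cases f' <;> simp_all [Forest.comp]
  | cons t f ih =>
    cases f' with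
    | nil => simp at hf
    | cons t' f' =>
      simp only [List.map_cons, List.cons.injEq] at hf
      simp only [Forest.comp, List.map_cons, List.cons.injEq, ← hf.1]
      exact ⟨CTree.leaves_graft_congr hf.1 (by simp only [List.map_take, hg]),
        ih hf.2 (by simp only [List.map_drop, hg])⟩

end Forest

namespace CTree

lemma graft_graft {t : CTree S} {f : Forest S} (g : Forest S) (h : t.leaves = f.length) :
    (t.graft f).graft g = t.graft (Forest.comp f g) := by
  induction t generalizing f g with
  | leaf =>
    match f, h with
    | [s], _ => simp [graft, Forest.comp_singleton]
  | node c l r ihl ihr =>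
    simp only [leaves] at h
    have hl : l.leaves = (f.take l.leaves).length := by simp; omega
    have hr : r.leaves = (f.drop l.leaves).length := by simp; omega
    have hcomp := Forest.comp_append (f.take l.leaves) (f.drop l.leaves) g
    rw [List.take_append_drop] at hcomp
    simp only [graft, leaves_graft_of_length_eq hl, ihl _ hl, ihr _ hr, hcomp,
      List.take_left' (Forest.length_comp _ _ ▸ hl.symm),
      List.drop_left' (Forest.length_comp _ _ ▸ hl.symm)]

end CTree

lemma leafPos_le_leaves (f : Forest S) (j : ℕ) : leafPos f j ≤ Forest.leaves f := by
  conv_rhs => rw [← List.take_append_drop j f]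
  rw [Forest.leaves_append]
  exact Nat.le_add_right _ _

lemma leafPos_strictMonoOn (f : Forest S) : StrictMonoOn (leafPos f) (Set.Iic f.length) := by
  intro j _ j' hj' h
  rw [Set.mem_Iic] at hj'
  have hne : (f.drop j).take (j' - j) ≠ [] := by simp; omega
  simp only [leafPos]
  rw [← Nat.add_sub_cancel' h.le, List.take_add, Forest.leaves_append]
  exact Nat.lt_add_of_pos_right (Forest.leaves_pos_of_ne_nil hne)

lemma leafPos_comp {f g : Forest S} (h : Forest.leaves f = g.length) (j : ℕ) :
    leafPos (Forest.comp f g) j = leafPos g (leafPos f j) := by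
  induction f generalizing g j with
  | nil => simp [Forest.comp, leafPos]
  | cons t f ih =>
    cases j with
    | zero => simp [leafPos]
    | succ j =>
      rw [Forest.leaves_cons] at h
      have ht : t.leaves = (g.take t.leaves).length := by simp; omega
      have hf : Forest.leaves f = (g.drop t.leaves).length := by simp; omega
      simp only [leafPos, Forest.comp, List.take_succ_cons, Forest.leaves_cons] at ih ⊢
      rw [ih hf, CTree.leaves_graft_of_length_eq ht, List.take_add, Forest.leaves_append]

lemma leafPos_comp_le_iff {f f' u : Forest S} (hf : Forest.leaves f = u.length)
    (hf' : Forest.leaves f' = u.length) {j j' : ℕ} :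
    leafPos (Forest.comp f u) j ≤ leafPos (Forest.comp f' u) j' ↔
      leafPos f j ≤ leafPos f' j' := by
  rw [leafPos_comp hf, leafPos_comp hf']
  exact (leafPos_strictMonoOn u).le_iff_le (hf ▸ leafPos_le_leaves f j)
    (hf' ▸ leafPos_le_leaves f' j')

section Skein

variable {R : CTree S → CTree S → Prop}

namespace SkeinEquiv

lemma map_leaves_eq (hR : LeafPres R) {f g : Forest S} (h : SkeinEquiv R f g) :
    f.map CTree.leaves = g.map CTree.leaves := by
  induction h with
  | of h => simp [hR _ _ h]
  | refl => rfl
  | symm _ ih => exact ih.symm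
  | trans _ _ ih₁ ih₂ => exact ih₁.trans ih₂
  | comp _ _ ih₁ ih₂ => exact Forest.map_leaves_comp_congr ih₁ ih₂
  | tensor _ _ ih₁ ih₂ => simp only [List.map_append, ih₁, ih₂]

lemma leaves_eq (hR : LeafPres R) {t t' : CTree S} (h : SkeinEquiv R [t] [t']) :
    t.leaves = t'.leaves := by
  simpa using h.map_leaves_eq hR

lemma leafPos_eq (hR : LeafPres R) {f g : Forest S} (h : SkeinEquiv R f g) (j : ℕ) :
    leafPos f j = leafPos g j := by
  simp only [leafPos, Forest.leaves, List.map_take, h.map_leaves_eq hR]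

lemma graft_left {t t' : CTree S} (h : SkeinEquiv R [t] [t']) (g : Forest S) :
    SkeinEquiv R [t.graft g] [t'.graft g] := by
  simpa only [Forest.comp_singleton] using h.comp (.refl g)

lemma graft_right (t : CTree S) {g g' : Forest S} (h : SkeinEquiv R g g') :
    SkeinEquiv R [t.graft g] [t.graft g'] := by
  simpa only [Forest.comp_singleton] using (SkeinEquiv.refl [t]).comp h

end SkeinEquiv

lemma LeftCancel.cancel_graft (hLC : LeftCancel (SkeinEquiv R)) {t : CTree S} {g g' : Forest S}
    (hg : t.leaves = g.length) (hg' : t.leaves = g'.length)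
    (h : SkeinEquiv R [t.graft g] [t.graft g']) : SkeinEquiv R g g' :=
  hLC [t] g g' (by simpa using hg) (by simpa using hg')
    (by simpa only [Forest.comp_singleton] using h)

structure IsCommonMultiple (R : CTree S → CTree S → Prop) (t t' : CTree S) (f f' : Forest S) :
    Prop where
  length_left : t.leaves = f.length
  length_right : t'.leaves = f'.length
  skein : SkeinEquiv R [t.graft f] [t'.graft f']

namespace IsCommonMultiple

variable {t t' t'' : CTree S} {f f' f'' : Forest S}

lemma symm (h : IsCommonMultiple R t t' f f') : IsCommonMultiple R t' t f' f :=
  ⟨h.length_right, h.length_left, h.skein.symm⟩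

lemma trans (h : IsCommonMultiple R t t' f f') (h' : IsCommonMultiple R t' t'' f' f'') :
    IsCommonMultiple R t t'' f f'' :=
  ⟨h.length_left, h'.length_right, h.skein.trans h'.skein⟩

lemma comp (h : IsCommonMultiple R t t' f f') (u : Forest S) :
    IsCommonMultiple R t t' (Forest.comp f u) (Forest.comp f' u) := by
  refine ⟨?_, ?_, ?_⟩
  · rw [Forest.length_comp, h.length_left]
  · rw [Forest.length_comp, h.length_right]
  · rw [← CTree.graft_graft u h.length_left, ← CTree.graft_graft u h.length_right]
    exact h.skein.graft_left u

lemma of_graft_left {u : Forest S} (h : IsCommonMultiple R (t.graft f) t' u f')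
    (hf : t.leaves = f.length) : IsCommonMultiple R t t' (Forest.comp f u) f' := by
  refine ⟨by rw [Forest.length_comp, hf], h.length_right, ?_⟩
  rw [← CTree.graft_graft u hf]
  exact h.skein

lemma leaves_eq (hR : LeafPres R) (h : IsCommonMultiple R t t' f f') :
    Forest.leaves f = Forest.leaves f' := by
  rw [← CTree.leaves_graft_of_length_eq h.length_left,
    ← CTree.leaves_graft_of_length_eq h.length_right]
  exact h.skein.leaves_eq hR

end IsCommonMultiple

lemma exists_isCommonMultiple (hOre : OreProp (SkeinEquiv R)) (t t' : CTree S) :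
    ∃ f f', IsCommonMultiple R t t' f f' := by
  obtain ⟨f, f', hf, hf', h⟩ := hOre [t] [t'] rfl
  rw [Forest.comp_singleton, Forest.comp_singleton] at h
  exact ⟨f, f', by simpa using hf, by simpa using hf', h⟩

lemma IsCommonMultiple.leafPos_le_iff (hR : LeafPres R) (hLC : LeftCancel (SkeinEquiv R))
    (hOre : OreProp (SkeinEquiv R)) {t t' : CTree S} {f f' g g' : Forest S}
    (hf : IsCommonMultiple R t t' f f') (hg : IsCommonMultiple R t t' g g') {j j' : ℕ} :
    leafPos f j ≤ leafPos f' j' ↔ leafPos g j ≤ leafPos g' j' := by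
  obtain ⟨u, v, hu, hv, huv⟩ := hOre f g (hf.length_left.symm.trans hg.length_left)
  have hu' : Forest.leaves f' = u.length := (hf.leaves_eq hR).symm.trans hu
  have hv' : Forest.leaves g' = v.length := (hg.leaves_eq hR).symm.trans hv
  have hf'g' : SkeinEquiv R (Forest.comp f' u) (Forest.comp g' v) :=
    hLC.cancel_graft (hf.comp u).length_right (hg.comp v).length_right
      ((hf.comp u).skein.symm.trans ((SkeinEquiv.graft_right t huv).trans (hg.comp v).skein))
  calc leafPos f j ≤ leafPos f' j'
      ↔ leafPos (Forest.comp f u) j ≤ leafPos (Forest.comp f' u) j' :=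
        (leafPos_comp_le_iff hu hu').symm
    _ ↔ leafPos (Forest.comp g v) j ≤ leafPos (Forest.comp g' v) j' := by
        rw [huv.leafPos_eq hR, hf'g'.leafPos_eq hR]
    _ ↔ leafPos g j ≤ leafPos g' j' := leafPos_comp_le_iff hv hv'

lemma IsCommonMultiple.mlle_iff (hR : LeafPres R) (hLC : LeftCancel (SkeinEquiv R))
    (hOre : OreProp (SkeinEquiv R)) {p q : CTree S × ℕ} {f f' : Forest S}
    (h : IsCommonMultiple R p.1 q.1 f f') :
    MLLe (SkeinEquiv R) p q ↔ leafPos f p.2 ≤ leafPos f' q.2 :=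
  ⟨fun ⟨_, _, hg, hg', hE, hle⟩ =>
      (IsCommonMultiple.leafPos_le_iff hR hLC hOre ⟨hg, hg', hE⟩ h).1 hle,
    fun hle => ⟨f, f', h.length_left, h.length_right, h.skein, hle⟩⟩

lemma MLRel.exists_isCommonMultiple_leafPos_eq (hR : LeafPres R) {a b : CTree S × ℕ}
    (hab : MLRel (SkeinEquiv R) a b) {t : CTree S} {f f' : Forest S}
    (h : IsCommonMultiple R b.1 t f f') :
    ∃ g, IsCommonMultiple R a.1 t g f' ∧ leafPos g a.2 = leafPos f b.2 := by
  cases hab with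
  | skein hE =>
    exact ⟨f, ⟨(hE.leaves_eq hR).trans h.length_left, h.length_right,
      (hE.graft_left f).trans h.skein⟩, rfl⟩
  | grow t g j hg =>
    refine ⟨Forest.comp g f, h.of_graft_left hg, leafPos_comp ?_ j⟩
    rw [← CTree.leaves_graft_of_length_eq hg]
    exact h.length_left

lemma MLRel.mlle_left_iff (hR : LeafPres R) (hLC : LeftCancel (SkeinEquiv R))
    (hOre : OreProp (SkeinEquiv R)) {a b : CTree S × ℕ} (hab : MLRel (SkeinEquiv R) a b)
    (q : CTree S × ℕ) : MLLe (SkeinEquiv R) a q ↔ MLLe (SkeinEquiv R) b q := by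
  obtain ⟨f, f', hb⟩ := exists_isCommonMultiple hOre b.1 q.1
  obtain ⟨g, ha, hpos⟩ := hab.exists_isCommonMultiple_leafPos_eq hR hb
  rw [ha.mlle_iff hR hLC hOre, hb.mlle_iff hR hLC hOre, hpos]

lemma MLRel.mlle_right_iff (hR : LeafPres R) (hLC : LeftCancel (SkeinEquiv R))
    (hOre : OreProp (SkeinEquiv R)) {a b : CTree S × ℕ} (hab : MLRel (SkeinEquiv R) a b)
    (q : CTree S × ℕ) : MLLe (SkeinEquiv R) q a ↔ MLLe (SkeinEquiv R) q b := by
  obtain ⟨f, f', hb⟩ := exists_isCommonMultiple hOre b.1 q.1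
  obtain ⟨g, ha, hpos⟩ := hab.exists_isCommonMultiple_leafPos_eq hR hb
  rw [ha.symm.mlle_iff hR hLC hOre, hb.symm.mlle_iff hR hLC hOre, hpos]

lemma MLEquiv.mlle_left_eq (hR : LeafPres R) (hLC : LeftCancel (SkeinEquiv R))
    (hOre : OreProp (SkeinEquiv R)) {a b : CTree S × ℕ} (h : MLEquiv (SkeinEquiv R) a b) :
    MLLe (SkeinEquiv R) a = MLLe (SkeinEquiv R) b :=
  congrArg (Quot.lift (MLLe (SkeinEquiv R))
      fun _ _ hr => funext fun q => propext (hr.mlle_left_iff hR hLC hOre q))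
    (Quot.eqvGen_sound h)

lemma MLEquiv.mlle_right_eq (hR : LeafPres R) (hLC : LeftCancel (SkeinEquiv R))
    (hOre : OreProp (SkeinEquiv R)) {a b : CTree S × ℕ} (h : MLEquiv (SkeinEquiv R) a b) :
    (MLLe (SkeinEquiv R) · a) = (MLLe (SkeinEquiv R) · b) :=
  congrArg (Quot.lift (fun a q => MLLe (SkeinEquiv R) q a)
      fun _ _ hr => funext fun q => propext (hr.mlle_right_iff hR hLC hOre q))
    (Quot.eqvGen_sound h)

lemma IsCommonMultiple.mlEquiv {p q : CTree S × ℕ} {f f' : Forest S}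
    (h : IsCommonMultiple R p.1 q.1 f f') (hpos : leafPos f p.2 = leafPos f' q.2) :
    MLEquiv (SkeinEquiv R) p q := by
  have hp : MLEquiv (SkeinEquiv R) p (p.1.graft f, leafPos f p.2) :=
    .rel _ _ (.grow p.1 f p.2 h.length_left)
  have hpq : MLEquiv (SkeinEquiv R) (p.1.graft f, leafPos f p.2) (q.1.graft f', leafPos f' q.2) :=
    hpos ▸ .rel _ _ (.skein h.skein)
  have hq : MLEquiv (SkeinEquiv R) q (q.1.graft f', leafPos f' q.2) :=
    .rel _ _ (.grow q.1 f' q.2 h.length_right)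
  exact hp.trans _ _ _ (hpq.trans _ _ _ (hq.symm _ _))

lemma mlle_refl (p : CTree S × ℕ) : MLLe (SkeinEquiv R) p p :=
  ⟨List.replicate p.1.leaves .leaf, List.replicate p.1.leaves .leaf, by simp, by simp,
    .refl _, le_rfl⟩

lemma mlle_trans (hR : LeafPres R) (hLC : LeftCancel (SkeinEquiv R))
    (hOre : OreProp (SkeinEquiv R)) {p q r : CTree S × ℕ}
    (hpq : MLLe (SkeinEquiv R) p q) (hqr : MLLe (SkeinEquiv R) q r) :
    MLLe (SkeinEquiv R) p r := by
  obtain ⟨f, f', h⟩ := exists_isCommonMultiple hOre p.1 q.1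
  obtain ⟨u, g, h'⟩ := exists_isCommonMultiple hOre (q.1.graft f') r.1
  have hpq' := h.comp u
  have hqr' := h'.of_graft_left h.length_right
  rw [hpq'.mlle_iff hR hLC hOre] at hpq
  rw [hqr'.mlle_iff hR hLC hOre] at hqr
  exact ((hpq'.trans hqr').mlle_iff hR hLC hOre).2 (hpq.trans hqr)

lemma mlle_antisymm (hR : LeafPres R) (hLC : LeftCancel (SkeinEquiv R))
    (hOre : OreProp (SkeinEquiv R)) {p q : CTree S × ℕ}
    (hpq : MLLe (SkeinEquiv R) p q) (hqp : MLLe (SkeinEquiv R) q p) :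
    MLEquiv (SkeinEquiv R) p q := by
  obtain ⟨f, f', h⟩ := exists_isCommonMultiple hOre p.1 q.1
  exact h.mlEquiv <|
    ((h.mlle_iff hR hLC hOre).1 hpq).antisymm ((h.symm.mlle_iff hR hLC hOre).1 hqp)

lemma mlle_total (hOre : OreProp (SkeinEquiv R)) (p q : CTree S × ℕ) :
    MLLe (SkeinEquiv R) p q ∨ MLLe (SkeinEquiv R) q p := by
  obtain ⟨f, f', h⟩ := exists_isCommonMultiple hOre p.1 q.1
  exact (le_total (leafPos f p.2) (leafPos f' q.2)).imp
    (fun hle => ⟨f, f', h.length_left, h.length_right, h.skein, hle⟩)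
    (fun hle => ⟨f', f, h.length_right, h.length_left, h.skein.symm, hle⟩)

end Skein

/-- the relation `[t,j] ⪯ [t',j']` (defined by `j^f ≤ j'^{f'}` for a
common multiple `t∘f = t'∘f'`) is independent of the choice of common multiple,
descends to the set `X` of marked-leaf classes, and is a total order there. -/
theorem marked_leaf_total_order {S : Type} (R : CTree S → CTree S → Prop)
    (hR : LeafPres R)
    (hLC : LeftCancel (SkeinEquiv R)) (hOre : OreProp (SkeinEquiv R)) :
    (∀ (t t' : CTree S) (j j' : ℕ), j < CTree.leaves t → j' < CTree.leaves t' →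
      ∀ f f' g g' : Forest S,
        CTree.leaves t = f.length → CTree.leaves t' = f'.length →
        CTree.leaves t = g.length → CTree.leaves t' = g'.length →
        SkeinEquiv R [CTree.graft t f] [CTree.graft t' f'] →
        SkeinEquiv R [CTree.graft t g] [CTree.graft t' g'] →
        leafPos f j ≤ leafPos f' j' → leafPos g j ≤ leafPos g' j')
    ∧ (∀ p p' q q' : CTree S × ℕ, p.2 < CTree.leaves p.1 → p'.2 < CTree.leaves p'.1 →
        q.2 < CTree.leaves q.1 → q'.2 < CTree.leaves q'.1 →
        MLEquiv (SkeinEquiv R) p p' → MLEquiv (SkeinEquiv R) q q' →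
        (MLLe (SkeinEquiv R) p q ↔ MLLe (SkeinEquiv R) p' q'))
    ∧ (∀ p : CTree S × ℕ, p.2 < CTree.leaves p.1 → MLLe (SkeinEquiv R) p p)
    ∧ (∀ p q r : CTree S × ℕ, p.2 < CTree.leaves p.1 → q.2 < CTree.leaves q.1 →
        r.2 < CTree.leaves r.1 →
        MLLe (SkeinEquiv R) p q → MLLe (SkeinEquiv R) q r → MLLe (SkeinEquiv R) p r)
    ∧ (∀ p q : CTree S × ℕ, p.2 < CTree.leaves p.1 → q.2 < CTree.leaves q.1 →
        MLLe (SkeinEquiv R) p q → MLLe (SkeinEquiv R) q p → MLEquiv (SkeinEquiv R) p q)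
    ∧ (∀ p q : CTree S × ℕ, p.2 < CTree.leaves p.1 → q.2 < CTree.leaves q.1 →
        MLLe (SkeinEquiv R) p q ∨ MLLe (SkeinEquiv R) q p) := by
  refine ⟨fun t t' j j' _ _ f f' g g' hf hf' hg hg' hEf hEg =>
      (IsCommonMultiple.leafPos_le_iff hR hLC hOre ⟨hf, hf', hEf⟩ ⟨hg, hg', hEg⟩).1,
    fun p p' q q' _ _ _ _ hp hq => Iff.of_eq <|
      (congrFun (hp.mlle_left_eq hR hLC hOre) q).trans (congrFun (hq.mlle_right_eq hR hLC hOre) p'),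
    fun p _ => mlle_refl p,
    fun _ _ _ _ _ _ => mlle_trans hR hLC hOre,
    fun _ _ _ _ => mlle_antisymm hR hLC hOre,
    fun p q _ _ => mlle_total hOre p q⟩

end ForestSkein
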